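/- arXiv:2103.02427 — 2 statements merged into one kernel-verified Lean document; each statement's English description precedes it below -/
import Mathlib

section
/- Let f(x) = a₁x + a₂x² + a₃x³ + ⋯ be a formal power series with zero constant term and f^(n) its n-fold composition. Then for all n ≥ 1, the coefficient of x³ in f^(n) satisfies f_3^(n) = a₁^{n−1} a₃ ∑_{i=0}^{n−1} a₁^{2i} + 2 a₁^{n−1} a₂² ∑_{i=0}^{n−2} a₁^{2i} ∑_{i₁=0}^{n−i−2} a₁^{i₁}. -/
/-! Since `f` has no constant term, only the terms `j ≤ 3` of `g ∘ f = ∑ g_j f^j` reach the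
coefficients of `x`, `x²`, `x³`, and these terms give the recurrences
`c₁ ↦ c₁ a₁`, `c₂ ↦ c₁ a₂ + c₂ a₁²`, `c₃ ↦ c₁ a₃ + 2 c₂ a₁ a₂ + c₃ a₁³`
for the coefficients `cₖ` of `f^(n) ↦ f^(n+1)`. The closed forms solve them by induction on `n`;
peeling off the `i = 0` term of the double sum is what matches the `2 c₂ a₁ a₂` contribution. -/

open PowerSeries Finset

/-- Composition of formal power series (meaningful when `g` has zero constant term):
the coefficient of `x^k` in `f(g(x))` is `∑_{j=0}^{k} f_j · [x^k](g^j)`. -/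
noncomputable def pscomp {R : Type*} [CommRing R] (f g : PowerSeries R) : PowerSeries R :=
  PowerSeries.mk fun k =>
    ∑ j ∈ Finset.range (k + 1), (PowerSeries.coeff j f) * (PowerSeries.coeff k (g ^ j))

/-- The `n`-fold composition `f^(n)`: `f^(1) = f`, `f^(n) = f^(n-1) ∘ f`. -/
noncomputable def psiter {R : Type*} [CommRing R] (f : PowerSeries R) : ℕ → PowerSeries R
  | 0 => PowerSeries.X
  | 1 => f
  | (n + 2) => pscomp (psiter f (n + 1)) f

theorem sum_range_succ_pow_two_mul_geom_sum {R : Type*} [CommSemiring R] (x : R) (n : ℕ) :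
    ∑ i ∈ range (n + 1), x ^ (2 * i) * ∑ j ∈ range (n + 1 - i), x ^ j
      = ∑ j ∈ range (n + 1), x ^ j
        + x ^ 2 * ∑ i ∈ range n, x ^ (2 * i) * ∑ j ∈ range (n - i), x ^ j := by
  rw [sum_range_succ', add_comm]
  simp only [Nat.sub_zero, mul_zero, pow_zero, one_mul, Nat.add_sub_add_right]
  congr 1
  rw [mul_sum]
  exact sum_congr rfl fun i _ => by ring

section
variable {R : Type*} [CommRing R] {f : R⟦X⟧}

theorem coeff_pscomp (g f : R⟦X⟧) (k : ℕ) :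
    coeff k (pscomp g f) = ∑ j ∈ range (k + 1), coeff j g * coeff k (f ^ j) :=
  coeff_mk _ _

theorem coeff_two_sq (hf : constantCoeff f = 0) : coeff 2 (f ^ 2) = coeff 1 f ^ 2 := by
  simp [sq, coeff_mul, Finset.Nat.antidiagonal_succ, hf]

theorem coeff_three_sq (hf : constantCoeff f = 0) :
    coeff 3 (f ^ 2) = coeff 1 f * coeff 2 f + coeff 2 f * coeff 1 f := by
  simp [sq, coeff_mul, Finset.Nat.antidiagonal_succ, hf]

theorem coeff_three_cube (hf : constantCoeff f = 0) : coeff 3 (f ^ 3) = coeff 1 f ^ 3 := by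
  simp [pow_succ', coeff_mul, Finset.Nat.antidiagonal_succ, hf]

theorem coeff_one_pscomp (g f : R⟦X⟧) : coeff 1 (pscomp g f) = coeff 1 g * coeff 1 f := by
  simp [coeff_pscomp, sum_range_succ]

theorem coeff_two_pscomp (g : R⟦X⟧) (hf : constantCoeff f = 0) :
    coeff 2 (pscomp g f) = coeff 1 g * coeff 2 f + coeff 2 g * coeff 1 f ^ 2 := by
  simp [coeff_pscomp, sum_range_succ, coeff_two_sq hf]

theorem coeff_three_pscomp (g : R⟦X⟧) (hf : constantCoeff f = 0) :
    coeff 3 (pscomp g f) = coeff 1 g * coeff 3 f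
      + coeff 2 g * (coeff 1 f * coeff 2 f + coeff 2 f * coeff 1 f) + coeff 3 g * coeff 1 f ^ 3 := by
  simp [coeff_pscomp, sum_range_succ, coeff_three_sq hf, coeff_three_cube hf]

theorem coeff_one_psiter_succ (f : R⟦X⟧) (n : ℕ) :
    coeff 1 (psiter f (n + 1)) = coeff 1 f ^ (n + 1) := by
  induction n with
  | zero => simp [psiter]
  | succ n ih => rw [psiter, coeff_one_pscomp, ih, ← pow_succ]

theorem coeff_two_psiter_succ (hf : constantCoeff f = 0) (n : ℕ) :
    coeff 2 (psiter f (n + 1)) = coeff 1 f ^ n * coeff 2 f * ∑ i ∈ range (n + 1), coeff 1 f ^ i := by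
  induction n with
  | zero => simp [psiter]
  | succ n ih =>
    rw [psiter, coeff_two_pscomp _ hf, coeff_one_psiter_succ, ih,
      geom_sum_succ (x := coeff 1 f) (n := n + 1)]
    ring

theorem coeff_three_psiter_succ (hf : constantCoeff f = 0) (n : ℕ) :
    coeff 3 (psiter f (n + 1)) =
      coeff 1 f ^ n * coeff 3 f * ∑ i ∈ range (n + 1), coeff 1 f ^ (2 * i)
      + 2 * coeff 1 f ^ n * coeff 2 f ^ 2 *
          ∑ i ∈ range n, coeff 1 f ^ (2 * i) * ∑ j ∈ range (n - i), coeff 1 f ^ j := by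
  induction n with
  | zero => simp [psiter]
  | succ n ih =>
    rw [psiter, coeff_three_pscomp _ hf, coeff_one_psiter_succ, coeff_two_psiter_succ hf, ih,
      sum_range_succ_pow_two_mul_geom_sum]
    simp only [pow_mul]
    rw [geom_sum_succ (x := coeff 1 f ^ 2) (n := n + 1)]
    ring

end

theorem coeff_three_psiter_general {K : Type*} [Field K] (a : ℕ → K) (h0 : a 0 = 0)
    (n : ℕ) :
    PowerSeries.coeff 3 (psiter (PowerSeries.mk a) n) =
      a 1 ^ (n - 1) * a 3 * (∑ i ∈ Finset.range n, a 1 ^ (2 * i))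
      + 2 * a 1 ^ (n - 1) * a 2 ^ 2 *
          ∑ i ∈ Finset.range (n - 1), a 1 ^ (2 * i) * ∑ i1 ∈ Finset.range (n - i - 1), a 1 ^ i1 := by
  cases n with
  | zero => simp [psiter, coeff_X]
  | succ n =>
    have hf : constantCoeff (mk a) = 0 := by simpa using h0
    rw [coeff_three_psiter_succ hf]
    simp [Nat.sub_sub]

/-- `f_3^(n) = a₁^{n−1} a₃ ∑_{i=0}^{n−1} a₁^{2i}
  + 2 a₁^{n−1} a₂² ∑_{i=0}^{n−2} a₁^{2i} ∑_{i₁=0}^{n−i−2} a₁^{i₁}`. -/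
theorem coeff_three_psiter {K : Type*} [Field K] (a : ℕ → K) (h0 : a 0 = 0)
    (n : ℕ) (hn : 1 ≤ n) :
    PowerSeries.coeff 3 (psiter (PowerSeries.mk a) n) =
      a 1 ^ (n - 1) * a 3 * (∑ i ∈ Finset.range n, a 1 ^ (2 * i))
      + 2 * a 1 ^ (n - 1) * a 2 ^ 2 *
          ∑ i ∈ Finset.range (n - 1), a 1 ^ (2 * i) * ∑ i1 ∈ Finset.range (n - i - 1), a 1 ^ i1 :=
  coeff_three_psiter_general a h0 n
end

section
/- Let f(x) = x + a₂x² + ⋯ + a_k x^k + ⋯ (a₁ = 1) and f^(n) its n-fold composition with coefficients f_k^(n); write a_m^{[j]} for the coefficient of x^m in (f(x))^j. Then for k ≥ 3, f_k^(n) = C(n,1) a_k + ∑_{α=2}^{k−1} C(n,α) · ∑ a_k^{[j₁]} a_{j₁}^{[j₂]} ⋯ a_{j_{α−2}}^{[j_{α−1}]} a_{j_{α−1}}^{[1]}, where the inner sum ranges over all strictly decreasing sequences k−1 ≥ j₁ > j₂ > ⋯ > j_{α−1} ≥ 2, i.e., over all (α−1)-element subsets of {2, …, k−1}. -/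
open PowerSeries Finset

/-!
The coefficient sequence of `f^(n)` is `Mⁿ e₁`, where `M = (a_k^{[j]})_{k,j}` is the matrix of
`g ↦ g ∘ f`. Since `a₀ = 0` and `a₁ = 1`, `M = 1 + N` with `N` strictly lower triangular, so the
binomial theorem gives `Mⁿ = ∑_α C(n, α) Nᵅ`. Expanding the matrix power, the `(k, 1)` entry of
`Nᵅ` is the sum over chains `k > j₁ > ⋯ > j_{α−1} > 1` of `a_k^{[j₁]} ⋯ a_{j_{α−1}}^{[1]}`, and
`Nᵅ e₁` vanishes at `k ≤ α`, which cuts the sum off at `α = k − 1`.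
-/

namespace Schroder

variable {R : Type*} [CommRing R]

theorem coeff_pow_self_of_constantCoeff_eq_zero {f : R⟦X⟧} (hf : constantCoeff f = 0) (k : ℕ) :
    coeff k (f ^ k) = coeff 1 f ^ k := by
  obtain ⟨g, rfl⟩ := X_dvd_iff.mpr hf
  simpa [mul_pow, coeff_zero_eq_constantCoeff] using coeff_X_pow_mul (g ^ k) k 0

/-- The matrix `(coeff k (f ^ j))_{k, j}` of `g ↦ g ∘ f` on coefficient sequences, cut off at
`j ≤ k` as in `pscomp`. When `f = x + O(x²)` it is unitriangular and `compRightStrict f` is its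
strictly lower part. -/
noncomputable def compRight (f : R⟦X⟧) : Module.End R (ℕ → R) :=
  LinearMap.pi fun k => ∑ j ∈ range (k + 1), coeff k (f ^ j) • LinearMap.proj j

noncomputable def compRightStrict (f : R⟦X⟧) : Module.End R (ℕ → R) :=
  LinearMap.pi fun k => ∑ j ∈ range k, coeff k (f ^ j) • LinearMap.proj j

@[simp]
theorem compRight_apply (f : R⟦X⟧) (c : ℕ → R) (k : ℕ) :
    compRight f c k = ∑ j ∈ range (k + 1), coeff k (f ^ j) * c j := by
  simp [compRight]

@[simp]
theorem compRightStrict_apply (f : R⟦X⟧) (c : ℕ → R) (k : ℕ) :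
    compRightStrict f c k = ∑ j ∈ range k, coeff k (f ^ j) * c j := by
  simp [compRightStrict]

theorem compRight_eq_one_add (f : R⟦X⟧) (hf0 : constantCoeff f = 0) (hf1 : coeff 1 f = 1) :
    compRight f = 1 + compRightStrict f := by
  ext c k
  simp [sum_range_succ, coeff_pow_self_of_constantCoeff_eq_zero hf0, hf1, add_comm]

theorem coeff_pscomp (g f : R⟦X⟧) (k : ℕ) :
    coeff k (pscomp g f) = compRight f (fun j => coeff j g) k := by
  simp [pscomp, mul_comm]

theorem psiter_succ (f : R⟦X⟧) (hf0 : constantCoeff f = 0) :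
    ∀ n, psiter f (n + 1) = pscomp (psiter f n) f
  | 0 => by
    ext k
    rcases k with _ | k
    · rw [coeff_pscomp]; simp [psiter, hf0]
    · simp [coeff_pscomp, psiter, coeff_X]
  | _ + 1 => rfl

theorem coeff_psiter_eq_compRight_pow (f : R⟦X⟧) (hf0 : constantCoeff f = 0) (n : ℕ) :
    (fun k => coeff k (psiter f n)) = (compRight f ^ n) (Pi.single 1 1) := by
  induction n with
  | zero => ext k; simp [psiter, coeff_X, Pi.single_apply]
  | succ n ih =>
    ext k
    rw [psiter_succ f hf0, coeff_pscomp, ih, pow_succ', Module.End.mul_apply]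

theorem coeff_psiter_eq_sum_choose (f : R⟦X⟧) (hf0 : constantCoeff f = 0) (hf1 : coeff 1 f = 1)
    (n k : ℕ) :
    coeff k (psiter f n) =
      ∑ α ∈ range (n + 1), (n.choose α : R) * (compRightStrict f ^ α) (Pi.single 1 1) k := by
  rw [show coeff k (psiter f n) = _ from congrFun (coeff_psiter_eq_compRight_pow f hf0 n) k,
    compRight_eq_one_add f hf0 hf1, add_comm, (Commute.one_right _).add_pow]
  simp only [one_pow, mul_one, LinearMap.sum_apply, Finset.sum_apply, Module.End.mul_apply,
    Module.End.natCast_apply, map_nsmul, Pi.smul_apply]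
  simp only [nsmul_eq_mul]

theorem _root_.Fin.strictAnti_cons {α : Type*} [Preorder α] {n : ℕ} {a : α}
    {f : Fin (n + 1) → α} : StrictAnti (Fin.cons a f : Fin (n + 2) → α) ↔ f 0 < a ∧ StrictAnti f :=
  liftFun_vecCons (· > ·)

def chains (β k : ℕ) : Finset (Fin (β + 1) → ℕ) :=
  (Fintype.piFinset fun _ : Fin (β + 1) => Finset.range (k + 1)).filter
    (fun j => j 0 = k ∧ StrictAnti j ∧ 2 ≤ j (Fin.last β))

/-- The inner sum of Schröder's formula for `α = β + 1`. -/
noncomputable def chainSum (a : ℕ → R) (β k : ℕ) : R :=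
  ∑ j ∈ chains β k,
    (∏ t : Fin β, coeff (j t.castSucc) (mk a ^ j t.succ)) * a (j (Fin.last β))

theorem mem_chains {β k : ℕ} {j : Fin (β + 1) → ℕ} :
    j ∈ chains β k ↔ j 0 = k ∧ StrictAnti j ∧ 2 ≤ j (Fin.last β) := by
  simp only [chains, mem_filter, Fintype.mem_piFinset, mem_range, and_iff_right_iff_imp]
  rintro ⟨rfl, hj, -⟩ i
  exact Nat.lt_succ_of_le (hj.antitone (Fin.zero_le i))

theorem two_le_of_mem_chains {β k : ℕ} {j : Fin (β + 1) → ℕ} (h : j ∈ chains β k) : 2 ≤ k := by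
  obtain ⟨rfl, hj, hlast⟩ := mem_chains.mp h
  exact hlast.trans (hj.antitone (Fin.zero_le _))

theorem cons_mem_chains_succ {β k m : ℕ} {j : Fin (β + 1) → ℕ} :
    Fin.cons m j ∈ chains (β + 1) k ↔ m = k ∧ j 0 < k ∧ j ∈ chains β (j 0) := by
  simp only [mem_chains, Fin.cons_zero, Fin.strictAnti_cons, ← Fin.succ_last, Fin.cons_succ,
    true_and]
  constructor
  · rintro ⟨rfl, ⟨h0, h⟩, hlast⟩
    exact ⟨rfl, h0, h, hlast⟩
  · rintro ⟨rfl, h0, h, hlast⟩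
    exact ⟨rfl, ⟨h0, h⟩, hlast⟩

theorem chains_zero {k : ℕ} (hk : 2 ≤ k) : chains 0 k = {fun _ => k} := by
  ext j
  simp only [mem_chains, mem_singleton, Fin.last_zero, Fin.strictAnti_iff_succ_lt,
    IsEmpty.forall_iff, true_and]
  constructor
  · rintro ⟨h, -⟩; exact funext fun i => Fin.eq_zero i ▸ h
  · rintro rfl; exact ⟨rfl, hk⟩

theorem chainSum_zero (a : ℕ → R) {k : ℕ} (hk : 2 ≤ k) : chainSum a 0 k = a k := by
  simp [chainSum, chains_zero hk]

theorem chainSum_succ (a : ℕ → R) (β k : ℕ) :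
    chainSum a (β + 1) k = ∑ m ∈ Ico 2 k, coeff k (mk a ^ m) * chainSum a β m := by
  simp_rw [chainSum, mul_sum]
  rw [sum_sigma']
  symm
  refine sum_nbij' (fun p => Fin.cons k p.2) (fun j => ⟨j 1, Fin.tail j⟩) ?_ ?_ ?_ ?_ ?_
  · rintro ⟨m, j⟩ hp
    obtain ⟨hm, hj⟩ := mem_sigma.mp hp
    dsimp only at hm hj ⊢
    obtain rfl := (mem_chains.mp hj).1
    exact cons_mem_chains_succ.mpr ⟨rfl, (mem_Ico.mp hm).2, hj⟩
  · intro j hj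
    rw [← Fin.cons_self_tail j, cons_mem_chains_succ] at hj
    obtain ⟨-, hlt, htail⟩ := hj
    exact mem_sigma.mpr ⟨mem_Ico.mpr ⟨two_le_of_mem_chains htail, hlt⟩, htail⟩
  · rintro ⟨m, j⟩ hp
    have hj := (mem_sigma.mp hp).2
    dsimp only at hj ⊢
    obtain rfl := (mem_chains.mp hj).1
    rfl
  · intro j hj
    rw [← Fin.cons_self_tail j, cons_mem_chains_succ] at hj
    simp [← hj.1]
  · rintro ⟨m, j⟩ hp
    have hj := (mem_sigma.mp hp).2
    dsimp only at hj ⊢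
    obtain rfl := (mem_chains.mp hj).1
    simp [Fin.prod_univ_succ, mul_assoc]

theorem compRightStrict_apply_of_le_one (f : R⟦X⟧) (c : ℕ → R) {k : ℕ} (hk : k ≤ 1) :
    compRightStrict f c k = 0 := by
  interval_cases k <;> simp

theorem compRightStrict_pow_single_apply_of_le (f : R⟦X⟧) {α k : ℕ} (h : k ≤ α) :
    (compRightStrict f ^ α) (Pi.single 1 1) k = 0 := by
  induction α generalizing k with
  | zero => simp [Nat.le_zero.mp h]
  | succ α ih =>
    rw [pow_succ', Module.End.mul_apply, compRightStrict_apply]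
    exact sum_eq_zero fun j hj => by rw [ih (by grind), mul_zero]

theorem compRightStrict_pow_succ_single_apply (a : ℕ → R) (β : ℕ) {k : ℕ} (hk : 2 ≤ k) :
    (compRightStrict (mk a) ^ (β + 1)) (Pi.single 1 1) k = chainSum a β k := by
  induction β generalizing k with
  | zero => simp [chainSum_zero a hk, Pi.single_apply, show 1 < k by omega]
  | succ β ih =>
    rw [pow_succ', Module.End.mul_apply, compRightStrict_apply, chainSum_succ, range_eq_Ico,
      ← sum_Ico_consecutive _ (Nat.zero_le 2) hk, sum_eq_zero, zero_add]
    · exact sum_congr rfl fun m hm => by rw [ih (mem_Ico.mp hm).1]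
    · intro j hj
      rw [pow_succ', Module.End.mul_apply,
        compRightStrict_apply_of_le_one _ _ (by grind), mul_zero]

theorem coeff_psiter_eq_sum_chainSum (a : ℕ → R) (h0 : a 0 = 0) (h1 : a 1 = 1) (n : ℕ) {k : ℕ}
    (hk : 2 ≤ k) :
    coeff k (psiter (mk a) n) = ∑ β ∈ Icc 0 (k - 2), (n.choose (β + 1) : R) * chainSum a β k := by
  have hv := fun β => compRightStrict_pow_succ_single_apply a β hk
  rw [coeff_psiter_eq_sum_choose _ (by simpa using h0) (by simpa using h1), sum_range_succ']
  simp only [hv, pow_zero, Module.End.one_apply, Pi.single_apply, if_neg (show k ≠ 1 by omega),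
    mul_zero, add_zero]
  rw [← eventually_constant_sum (N := n) (n := n + k) _ (Nat.le_add_right _ _),
    eventually_constant_sum (N := k - 1) _ (by omega), Nat.range_eq_Icc_zero_sub_one _ (by omega),
    Nat.sub_sub]
  · intro β hβ
    rw [← hv, compRightStrict_pow_single_apply_of_le _ (by omega), mul_zero]
  · intro β hβ
    rw [Nat.choose_eq_zero_of_lt (by omega), Nat.cast_zero, zero_mul]

end Schroder

theorem schroder_theorem_general {R : Type*} [CommRing R] (a : ℕ → R)
    (h0 : a 0 = 0) (h1 : a 1 = 1) (k n : ℕ) (hk : 3 ≤ k) :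
    PowerSeries.coeff k (psiter (PowerSeries.mk a) n) =
      (n.choose 1 : R) * a k
      + ∑ β ∈ Finset.Icc 1 (k - 2), (n.choose (β + 1) : R) *
          ∑ j ∈ (Fintype.piFinset fun _ : Fin (β + 1) => Finset.range (k + 1)).filter
              (fun j => j 0 = k ∧ StrictAnti j ∧ 2 ≤ j (Fin.last β)),
            (∏ t : Fin β,
                PowerSeries.coeff (j t.castSucc) ((PowerSeries.mk a) ^ (j t.succ))) *
              a (j (Fin.last β)) := by
  rw [Schroder.coeff_psiter_eq_sum_chainSum a h0 h1 n (by omega),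
    ← insert_Icc_add_one_left_eq_Icc (Nat.zero_le _), sum_insert (by simp),
    Schroder.chainSum_zero a (by omega)]
  rfl

/-- Schröder's Theorem (1871): if `a₁ = 1` and `k ≥ 3`, then
`f_k^(n) = C(n,1) a_k + ∑_{α=2}^{k−1} C(n,α) ∑ a_k^{[j₁]} a_{j₁}^{[j₂]} ⋯ a_{j_{α−2}}^{[j_{α−1}]} a_{j_{α−1}}^{[1]}`,
where the inner sum is over all strictly decreasing sequences
`k = j₀ > j₁ > ⋯ > j_{α−1} ≥ 2`.  Here `α = β + 1` and the sequence is encoded as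
a strictly antitone `j : Fin (β+1) → ℕ` with `j 0 = k` and `2 ≤ j (Fin.last β)`,
and `a_m^{[j]}` is the coefficient of `x^m` in `(f(x))^j`. -/
theorem schroder_theorem {R : Type*} [CommRing R] [CharZero R] (a : ℕ → R)
    (h0 : a 0 = 0) (h1 : a 1 = 1) (k n : ℕ) (hk : 3 ≤ k) (hn : 1 ≤ n) :
    PowerSeries.coeff k (psiter (PowerSeries.mk a) n) =
      (n.choose 1 : R) * a k
      + ∑ β ∈ Finset.Icc 1 (k - 2), (n.choose (β + 1) : R) *
          ∑ j ∈ (Fintype.piFinset fun _ : Fin (β + 1) => Finset.range (k + 1)).filter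
              (fun j => j 0 = k ∧ StrictAnti j ∧ 2 ≤ j (Fin.last β)),
            (∏ t : Fin β,
                PowerSeries.coeff (j t.castSucc) ((PowerSeries.mk a) ^ (j t.succ))) *
              a (j (Fin.last β)) :=
  schroder_theorem_general a h0 h1 k n hk
end
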